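/- arXiv:math/0310407 — 4 statements merged into one kernel-verified Lean document; each statement's English description precedes it below -/
import Mathlib

section
/- Let A be a bounded operator on ℓ²(ℤ,H) which commutes with the bilateral shift W. Then ‖P₊ A P₊‖ = ‖A‖. (This is the key compression lemma of Section 2, proved using the projections Pₙ onto {ξ : ξ(m) = 0 for m < n} and the fact that Pₙ → 1 strongly as n → −∞.) -/
/-!
Let `Q_k` be the truncation of `ℓ²(ℤ, H)` to the coordinates `n ≥ -k`. Then `W^k Q_k = P₊ W^k`,
and since `W^k` is isometric and commutes with `A`, `‖Q_k A Q_k‖ ≤ ‖P₊ A P₊‖`. As `k → ∞` the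
contractions `Q_k` tend strongly to the identity, so `Q_k A Q_k → A` strongly and
`‖A‖ ≤ ‖P₊ A P₊‖`; the reverse inequality holds because `‖P₊‖ ≤ 1`.
-/

open MeasureTheory ContinuousLinearMap

/-- Evaluation of a word in formal letters `x i` (`b = false`) and `x i *` (`b = true`)
at the tuple of operators `T`. -/
noncomputable def evalWord {k : ℕ} {H : Type*} [NormedAddCommGroup H] [InnerProductSpace ℂ H]
    [CompleteSpace H] (T : Fin k → H →L[ℂ] H) : List (Fin k × Bool) → H →L[ℂ] H
  | [] => 1
  | (i, b) :: w => (if b then adjoint (T i) else T i) * evalWord T w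

/-- A *-polynomial in `k` operator variables is a finite ℂ-linear combination of words;
`evalPoly T p` is its evaluation at the operators `T 0, ..., T (k-1)`. -/
noncomputable def evalPoly {k : ℕ} {H : Type*} [NormedAddCommGroup H] [InnerProductSpace ℂ H]
    [CompleteSpace H] (T : Fin k → H →L[ℂ] H) (p : List (ℂ × List (Fin k × Bool))) : H →L[ℂ] H :=
  (p.map fun cw => cw.1 • evalWord T cw.2).sum

/-- The degree of a *-polynomial: the maximal length of a word occurring in it. -/
def polyDegree {k : ℕ} (p : List (ℂ × List (Fin k × Bool))) : ℕ :=
  (p.map fun cw => cw.2.length).foldr max 0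

open Filter Topology
open scoped ENNReal

namespace ContinuousLinearMap

variable {𝕜 E : Type*} [NontriviallyNormedField 𝕜] [NormedAddCommGroup E] [NormedSpace 𝕜 E]

theorem norm_compress_le_of_intertwine {U P Q A : E →L[𝕜] E} (hU : ∀ x, ‖U x‖ = ‖x‖)
    (hUQ : U * Q = P * U) (hAU : Commute A U) : ‖Q * A * Q‖ ≤ ‖P * A * P‖ := by
  have hcomp : U * (Q * A * Q) = P * A * P * U :=
    calc U * (Q * A * Q) = (U * Q) * A * Q := by simp only [mul_assoc]
      _ = P * (U * A) * Q := by rw [hUQ]; simp only [mul_assoc]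
      _ = P * A * (U * Q) := by rw [← hAU.eq]; simp only [mul_assoc]
      _ = P * A * P * U := by rw [hUQ]; simp only [mul_assoc]
  refine opNorm_le_bound _ (norm_nonneg _) fun x => ?_
  calc ‖(Q * A * Q) x‖ = ‖(P * A * P) (U x)‖ := by
        rw [← hU, ← mul_apply_eq_comp, hcomp, mul_apply_eq_comp]
    _ ≤ ‖P * A * P‖ * ‖x‖ := by rw [← hU x]; exact le_opNorm _ _

theorem opNorm_le_of_tendsto_compress {α : Type*} {l : Filter α} [l.NeBot]
    {Q : α → E →L[𝕜] E} (hQ : ∀ k, ‖Q k‖ ≤ 1) (hQ1 : ∀ x, Tendsto (fun k => Q k x) l (𝓝 x))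
    (A : E →L[𝕜] E) {C : ℝ} (hC : ∀ k, ‖Q k * A * Q k‖ ≤ C) : ‖A‖ ≤ C := by
  obtain ⟨k₀⟩ := l.nonempty_of_neBot
  refine opNorm_le_bound A ((norm_nonneg _).trans (hC k₀)) fun x => ?_
  have herr : Tendsto (fun k => Q k (A (Q k x - x))) l (𝓝 0) := by
    refine squeeze_zero_norm (a := fun k => ‖A‖ * ‖Q k x - x‖) (fun k => ?_) ?_
    · calc ‖Q k (A (Q k x - x))‖ ≤ 1 * ‖A (Q k x - x)‖ := (Q k).le_of_opNorm_le (hQ k) _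
        _ ≤ ‖A‖ * ‖Q k x - x‖ := by rw [one_mul]; exact A.le_opNorm _
    · simpa using (tendsto_iff_norm_sub_tendsto_zero.1 (hQ1 x)).const_mul ‖A‖
  have hlim : Tendsto (fun k => (Q k * A * Q k) x) l (𝓝 (A x)) := by
    simpa only [mul_apply_eq_comp, add_zero, map_sub, add_sub_cancel] using (hQ1 (A x)).add herr
  exact le_of_tendsto' hlim.norm fun k =>
    ((Q k * A * Q k).le_opNorm x).trans (mul_le_mul_of_nonneg_right (hC k) (norm_nonneg x))

end ContinuousLinearMap

namespace lp

theorem norm_eq_of_apply_eq_comp_equiv {ι κ F : Type*} [NormedAddCommGroup F] {p : ℝ≥0∞}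
    (hp : 0 < p.toReal) (e : ι ≃ κ) {x : lp (fun _ : ι => F) p} {y : lp (fun _ : κ => F) p}
    (h : ∀ i, x i = y (e i)) : ‖x‖ = ‖y‖ := by
  rw [lp.norm_eq_tsum_rpow hp, lp.norm_eq_tsum_rpow hp]
  simp_rw [h]
  rw [e.tsum_eq (fun j => ‖y j‖ ^ p.toReal)]

variable {ι 𝕜 : Type*} [NontriviallyNormedField 𝕜] {E : ι → Type*} [∀ i, NormedAddCommGroup (E i)]
  [∀ i, NormedSpace 𝕜 (E i)] {p : ℝ≥0∞} [Fact (1 ≤ p)]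

noncomputable def truncate (s : Set ι) [DecidablePred (· ∈ s)] : lp E p →L[𝕜] lp E p :=
  LinearMap.mkContinuous
    { toFun ξ := ⟨fun i => if i ∈ s then ξ i else 0,
        (lp.memℓp ξ).mono' fun i => by split_ifs <;> simp⟩
      map_add' ξ η := by ext i; simp only [coeFn_add, Pi.add_apply]; split_ifs <;> simp
      map_smul' c ξ := by ext i; simp only [coeFn_smul, Pi.smul_apply]; split_ifs <;> simp }
    1 fun ξ => by
      rw [one_mul]
      refine lp.norm_mono (zero_lt_one.trans_le (Fact.out : 1 ≤ p)).ne' fun i => ?_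
      dsimp only [LinearMap.coe_mk, AddHom.coe_mk]
      split_ifs <;> simp

variable (s : Set ι) [DecidablePred (· ∈ s)]

@[simp] theorem truncate_apply (ξ : lp E p) (i : ι) :
    truncate (𝕜 := 𝕜) s ξ i = if i ∈ s then ξ i else 0 := rfl

theorem norm_truncate_le : ‖(truncate s : lp E p →L[𝕜] lp E p)‖ ≤ 1 :=
  LinearMap.mkContinuous_norm_le _ zero_le_one _

theorem tendsto_truncate {α : Type*} {l : Filter α} {s : α → Set ι}
    [∀ k, DecidablePred (· ∈ s k)] (hs : ∀ i, ∀ᶠ k in l, i ∈ s k) (hp : p ≠ ∞) (ξ : lp E p) :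
    Tendsto (fun k => truncate (𝕜 := 𝕜) (s k) ξ) l (𝓝 ξ) := by
  have hp₀ : 0 < p.toReal := ENNReal.toReal_pos (zero_lt_one.trans_le Fact.out).ne' hp
  rw [tendsto_iff_norm_sub_tendsto_zero]
  have htail : Tendsto (fun k => ∑' i, ‖(truncate (𝕜 := 𝕜) (s k) ξ - ξ) i‖ ^ p.toReal) l
      (𝓝 (∑' _ : ι, (0 : ℝ))) := by
    refine tendsto_tsum_of_dominated_convergence ((lp.memℓp ξ).summable hp₀)
      (fun i => tendsto_const_nhds.congr' ?_) (Eventually.of_forall fun k i => ?_)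
    · filter_upwards [hs i] with k hk
      simp [hk, Real.zero_rpow hp₀.ne']
    · rw [Real.norm_of_nonneg (by positivity)]
      gcongr
      simp only [coeFn_sub, Pi.sub_apply, truncate_apply]
      split_ifs <;> simp
  rw [tsum_zero] at htail
  have hroot := htail.rpow_const (p := 1 / p.toReal) (Or.inr (by positivity))
  rw [Real.zero_rpow (by positivity)] at hroot
  exact hroot.congr fun k => (lp.norm_eq_tsum_rpow hp₀ _).symm

end lp

/-- If `A` is a bounded operator on `ℓ²(ℤ,H)` commuting with the bilateral
shift `W`, then `‖P₊ A P₊‖ = ‖A‖`, where `P₊` is the orthogonal projection onto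
`{ξ : ξ(n) = 0 for all n < 0}`. -/
theorem stmt0 {H : Type} [NormedAddCommGroup H] [InnerProductSpace ℂ H] [CompleteSpace H]
    (W Pplus A : lp (fun _ : ℤ => H) 2 →L[ℂ] lp (fun _ : ℤ => H) 2)
    (hW : ∀ (ξ : lp (fun _ : ℤ => H) 2) (n : ℤ), (W ξ) n = ξ (n - 1))
    (hP : ∀ (ξ : lp (fun _ : ℤ => H) 2) (n : ℤ), (Pplus ξ) n = if 0 ≤ n then ξ n else 0)
    (hcomm : A * W = W * A) :
    ‖Pplus * A * Pplus‖ = ‖A‖ := by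
  have hPplus : Pplus = lp.truncate (Set.Ici 0) := by ext ξ n; simp [hP]
  have hWpow_apply (k : ℕ) (ξ : lp (fun _ : ℤ => H) 2) (n : ℤ) : (W ^ k) ξ n = ξ (n - k) := by
    induction k generalizing n with
    | zero => simp
    | succ k ih => rw [pow_succ', mul_apply_eq_comp, hW, ih]; push_cast; ring_nf
  have hWpow_norm (k : ℕ) (ξ : lp (fun _ : ℤ => H) 2) : ‖(W ^ k) ξ‖ = ‖ξ‖ :=
    lp.norm_eq_of_apply_eq_comp_equiv (by norm_num) (Equiv.subRight (k : ℤ)) (hWpow_apply k ξ)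
  have hWpow_truncate (k : ℕ) :
      W ^ k * lp.truncate (Set.Ici (-k : ℤ)) = Pplus * W ^ k := by
    ext ξ n
    rw [mul_apply_eq_comp, mul_apply_eq_comp, hWpow_apply, hP, hWpow_apply, lp.truncate_apply]
    simp
  refine le_antisymm ?_ ?_
  · calc ‖Pplus * A * Pplus‖ ≤ ‖Pplus‖ * ‖A‖ * ‖Pplus‖ := norm_mul₃_le
      _ ≤ 1 * ‖A‖ * 1 := by gcongr <;> (rw [hPplus]; exact lp.norm_truncate_le _)
      _ = ‖A‖ := by ring
  · refine opNorm_le_of_tendsto_compress (l := atTop) (fun k => lp.norm_truncate_le _)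
      (fun ξ => lp.tendsto_truncate (fun n => ?_) (by norm_num) ξ) A
      fun k => norm_compress_le_of_intertwine (hWpow_norm k) (hWpow_truncate k)
        (Commute.pow_right hcomm k)
    filter_upwards [eventually_ge_atTop n.natAbs] with k hk
    simp only [Set.mem_Ici]
    omega
end

section
/- Let A₁,…,A_k be bounded operators on H and let p be a *-polynomial in k operator variables of degree d. Then for every integer m > d one has V*^m · p(Ψ⁺_{A₁},…,Ψ⁺_{A_k}) · V^m = P₊ · p(Ψ_{A₁},…,Ψ_{A_k}) · P₊ as operators on ℓ²(ℤ,H). (This is the operator-theoretic content of Observation 2 in the discrete case, where Ψ_{A_i} plays the role of ψ̃(e_i) = ψ(e_i)⊗U and Ψ⁺_{A_i} the role of ψ₊(e_i).) -/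
/-!
For `m ≥ 1`, `V ^ m = W ^ m P₊` moves every vector into `ℓ²` supported on `[m, ∞)`. Each
letter `Ψ_A` or `Ψ_A*` moves supports by one step, so a word of length `< m` in the `Ψ⁺` never
reaches the negative half-line on such vectors and agrees there with the same word in the `Ψ`.
The `Ψ_A` and their adjoints commute with `W`, and `W* W = 1`, so conjugating back with
`V* ^ m = P₊ W* ^ m` leaves `P₊ p(Ψ) P₊`.
-/

open MeasureTheory ContinuousLinearMap

open scoped lp InnerProductSpace

section StarPolynomial

variable {k : ℕ} {E : Type*} [NormedAddCommGroup E] [InnerProductSpace ℂ E] [CompleteSpace E]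

lemma length_le_polyDegree {p : List (ℂ × List (Fin k × Bool))} {cw : ℂ × List (Fin k × Bool)}
    (h : cw ∈ p) : cw.2.length ≤ polyDegree p := by
  induction p with
  | nil => simp at h
  | cons a p ih =>
    change cw.2.length ≤ max a.2.length (polyDegree p)
    rcases List.mem_cons.1 h with rfl | h
    · exact le_max_left _ _
    · exact (ih h).trans (le_max_right _ _)

lemma evalPoly_cons (T : Fin k → E →L[ℂ] E) (cw : ℂ × List (Fin k × Bool))
    (p : List (ℂ × List (Fin k × Bool))) :
    evalPoly T (cw :: p) = cw.1 • evalWord T cw.2 + evalPoly T p := by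
  simp [evalPoly]

lemma mul_evalPoly_mul_eq {T T' : Fin k → E →L[ℂ] E} {L R L' R' : E →L[ℂ] E}
    (p : List (ℂ × List (Fin k × Bool)))
    (h : ∀ cw ∈ p, L * evalWord T cw.2 * R = L' * evalWord T' cw.2 * R') :
    L * evalPoly T p * R = L' * evalPoly T' p * R' := by
  induction p with
  | nil => simp [evalPoly]
  | cons cw p ih =>
    rw [List.forall_mem_cons] at h
    simp only [evalPoly_cons, mul_add, add_mul, mul_smul_comm, smul_mul_assoc, h.1, ih h.2]

lemma commute_evalWord {T : Fin k → E →L[ℂ] E} {S : E →L[ℂ] E}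
    (hT : ∀ i, Commute (T i) S) (hT' : ∀ i, Commute (adjoint (T i)) S) :
    ∀ w, Commute (evalWord T w) S
  | [] => Commute.one_left S
  | (i, b) :: w => by
    cases b
    · exact (hT i).mul_left (commute_evalWord hT hT' w)
    · exact (hT' i).mul_left (commute_evalWord hT hT' w)

end StarPolynomial

section WeightedShift

variable {H : Type*} [NormedAddCommGroup H]

def SupportedFrom (c : ℤ) (ξ : ℓ²(ℤ, H)) : Prop :=
  ∀ n < c, ξ n = 0

lemma SupportedFrom.mono {c c' : ℤ} {ξ : ℓ²(ℤ, H)} (h : SupportedFrom c ξ) (hc : c' ≤ c) :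
    SupportedFrom c' ξ :=
  fun n hn => h n (hn.trans_le hc)

variable [InnerProductSpace ℂ H]

def IsWeightedShift (B : H →L[ℂ] H) (T : ℓ²(ℤ, H) →L[ℂ] ℓ²(ℤ, H)) : Prop :=
  ∀ ξ n, T ξ n = B (ξ (n - 1))

namespace IsWeightedShift

variable {B : H →L[ℂ] H} {T W : ℓ²(ℤ, H) →L[ℂ] ℓ²(ℤ, H)}

lemma apply_single (hT : IsWeightedShift B T) (n : ℤ) (v : H) :
    T (lp.single 2 n v) = lp.single 2 (n + 1) (B v) := by
  ext j
  rw [hT, lp.single_apply, lp.single_apply]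
  by_cases h : j = n + 1
  · subst h; simp
  · rw [Pi.single_eq_of_ne h, Pi.single_eq_of_ne (by omega), map_zero]

lemma supportedFrom (hT : IsWeightedShift B T) {c : ℤ} {ξ : ℓ²(ℤ, H)} (hξ : SupportedFrom c ξ) :
    SupportedFrom (c + 1) (T ξ) :=
  fun n hn => by rw [hT, hξ _ (by omega), map_zero]

lemma supportedFrom_pow (hT : IsWeightedShift B T) {c : ℤ} {ξ : ℓ²(ℤ, H)}
    (hξ : SupportedFrom c ξ) : ∀ j : ℕ, SupportedFrom (c + j) ((T ^ j) ξ)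
  | 0 => by simpa using hξ
  | j + 1 => by
    rw [pow_succ', mul_apply_eq_comp, Nat.cast_succ, ← add_assoc]
    exact hT.supportedFrom (hT.supportedFrom_pow hξ j)

lemma commute (hT : IsWeightedShift B T) (hW : IsWeightedShift 1 W) : Commute T W := by
  ext ξ n
  simp only [mul_apply_eq_comp, hT _ n, hW _ n, hW _ (n - 1), hT _ (n - 1), one_apply_eq_self]

end IsWeightedShift

variable [CompleteSpace H]

lemma adjoint_apply_eq_of_inner_single {T : ℓ²(ℤ, H) →L[ℂ] ℓ²(ℤ, H)} {ξ : ℓ²(ℤ, H)} {n : ℤ}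
    {x : H} (hx : ∀ v, ⟪x, v⟫_ℂ = ⟪ξ, T (lp.single 2 n v)⟫_ℂ) :
    adjoint T ξ n = x :=
  ext_inner_right ℂ fun v => by rw [← lp.inner_single_right, adjoint_inner_left, hx]

namespace IsWeightedShift

variable {B : H →L[ℂ] H} {T W : ℓ²(ℤ, H) →L[ℂ] ℓ²(ℤ, H)}

lemma adjoint_apply (hT : IsWeightedShift B T) (ξ : ℓ²(ℤ, H)) (n : ℤ) :
    adjoint T ξ n = adjoint B (ξ (n + 1)) :=
  adjoint_apply_eq_of_inner_single fun v => by
    rw [hT.apply_single, lp.inner_single_right, adjoint_inner_left]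

lemma supportedFrom_adjoint (hT : IsWeightedShift B T) {c : ℤ} {ξ : ℓ²(ℤ, H)}
    (hξ : SupportedFrom c ξ) : SupportedFrom (c - 1) (adjoint T ξ) :=
  fun n hn => by rw [hT.adjoint_apply, hξ _ (by omega), map_zero]

lemma commute_adjoint (hT : IsWeightedShift B T) (hW : IsWeightedShift 1 W) :
    Commute (adjoint T) W := by
  ext ξ n
  simp only [mul_apply_eq_comp, hT.adjoint_apply, hW _, one_apply_eq_self, sub_add_cancel,
    add_sub_cancel_right]

lemma adjoint_mul_self (hW : IsWeightedShift 1 W) : adjoint W * W = 1 := by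
  ext ξ n
  rw [mul_apply_eq_comp, hW.adjoint_apply, hW, ← star_eq_adjoint, star_one, add_sub_cancel_right]
  rfl

lemma adjoint_pow_mul_pow (hW : IsWeightedShift 1 W) : ∀ m : ℕ, adjoint W ^ m * W ^ m = 1
  | 0 => by simp
  | m + 1 => by
    rw [pow_succ, pow_succ', mul_assoc, ← mul_assoc (adjoint W), hW.adjoint_mul_self, one_mul,
      hW.adjoint_pow_mul_pow m]

end IsWeightedShift

end WeightedShift

section Compression

variable {H : Type*} [NormedAddCommGroup H] [InnerProductSpace ℂ H]

def IsProjectionOntoNonneg (P : ℓ²(ℤ, H) →L[ℂ] ℓ²(ℤ, H)) : Prop :=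
  ∀ ξ n, P ξ n = if 0 ≤ n then ξ n else 0

namespace IsProjectionOntoNonneg

variable {P : ℓ²(ℤ, H) →L[ℂ] ℓ²(ℤ, H)}

lemma apply_of_supportedFrom (hP : IsProjectionOntoNonneg P) {c : ℤ} {ξ : ℓ²(ℤ, H)}
    (hξ : SupportedFrom c ξ) (hc : 0 ≤ c) : P ξ = ξ := by
  ext n
  rw [hP]
  split_ifs with h
  · rfl
  · exact (hξ n (by omega)).symm

lemma supportedFrom_apply (hP : IsProjectionOntoNonneg P) (ξ : ℓ²(ℤ, H)) :
    SupportedFrom 0 (P ξ) :=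
  fun n hn => by rw [hP, if_neg (by omega)]

lemma mul_of_supportedFrom (hP : IsProjectionOntoNonneg P) {S : ℓ²(ℤ, H) →L[ℂ] ℓ²(ℤ, H)}
    (hS : ∀ ξ, SupportedFrom 0 (S ξ)) : P * S = S := by
  ext1 ξ
  exact hP.apply_of_supportedFrom (hS ξ) le_rfl

lemma mul_self (hP : IsProjectionOntoNonneg P) : P * P = P :=
  hP.mul_of_supportedFrom hP.supportedFrom_apply

lemma mul_pow_mul_self (hP : IsProjectionOntoNonneg P) {B : H →L[ℂ] H}
    {W : ℓ²(ℤ, H) →L[ℂ] ℓ²(ℤ, H)} (hW : IsWeightedShift B W) (j : ℕ) :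
    P * (W ^ j * P) = W ^ j * P :=
  hP.mul_of_supportedFrom fun ξ =>
    (hW.supportedFrom_pow (hP.supportedFrom_apply ξ) j).mono (by omega)

lemma compress_pow_mul_self (hP : IsProjectionOntoNonneg P) {B : H →L[ℂ] H}
    {W : ℓ²(ℤ, H) →L[ℂ] ℓ²(ℤ, H)} (hW : IsWeightedShift B W) :
    ∀ j : ℕ, (P * W * P) ^ j * P = W ^ j * P
  | 0 => by simp
  | j + 1 => by
    rw [pow_succ', mul_assoc, hP.compress_pow_mul_self hW j, mul_assoc, mul_assoc,
      hP.mul_pow_mul_self hW, ← mul_assoc W, ← pow_succ', hP.mul_pow_mul_self hW]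

lemma compress_pow (hP : IsProjectionOntoNonneg P) {B : H →L[ℂ] H}
    {W : ℓ²(ℤ, H) →L[ℂ] ℓ²(ℤ, H)} (hW : IsWeightedShift B W) {m : ℕ} (hm : m ≠ 0) :
    (P * W * P) ^ m = W ^ m * P := by
  obtain ⟨j, rfl⟩ := Nat.exists_eq_succ_of_ne_zero hm
  rw [← hP.compress_pow_mul_self hW]
  simp only [pow_succ, mul_assoc, hP.mul_self]

variable [CompleteSpace H]

lemma adjoint_eq (hP : IsProjectionOntoNonneg P) : adjoint P = P := by
  refine ((eq_adjoint_iff P P).2 fun ξ η => ?_).symm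
  rw [lp.inner_eq_tsum, lp.inner_eq_tsum]
  refine tsum_congr fun n => ?_
  rw [hP, hP]
  split_ifs <;> simp

lemma adjoint_compress (hP : IsProjectionOntoNonneg P) (T : ℓ²(ℤ, H) →L[ℂ] ℓ²(ℤ, H)) :
    adjoint (P * T * P) = P * adjoint T * P := by
  rw [← star_eq_adjoint, star_mul, star_mul, star_eq_adjoint, star_eq_adjoint, hP.adjoint_eq,
    mul_assoc]

lemma compress_letter_apply (hP : IsProjectionOntoNonneg P) {B : H →L[ℂ] H}
    {T : ℓ²(ℤ, H) →L[ℂ] ℓ²(ℤ, H)} (hT : IsWeightedShift B T) (b : Bool) {c : ℤ}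
    {ξ : ℓ²(ℤ, H)} (hξ : SupportedFrom c ξ) (hc : 1 ≤ c) :
    (if b then adjoint (P * T * P) else P * T * P) ξ = (if b then adjoint T else T) ξ ∧
      SupportedFrom (c - 1) ((if b then adjoint T else T) ξ) := by
  have hPξ : P ξ = ξ := hP.apply_of_supportedFrom hξ (by omega)
  cases b
  · have hTξ := hT.supportedFrom hξ
    simp only [Bool.false_eq_true, if_false, mul_apply_eq_comp, hPξ]
    exact ⟨hP.apply_of_supportedFrom hTξ (by omega), hTξ.mono (by omega)⟩
  · have hTξ := hT.supportedFrom_adjoint hξ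
    simp only [if_true, hP.adjoint_compress, mul_apply_eq_comp, hPξ]
    exact ⟨hP.apply_of_supportedFrom hTξ (by omega), hTξ⟩

lemma evalWord_compress_apply (hP : IsProjectionOntoNonneg P) {k : ℕ} {A : Fin k → H →L[ℂ] H}
    {T : Fin k → ℓ²(ℤ, H) →L[ℂ] ℓ²(ℤ, H)} (hT : ∀ i, IsWeightedShift (A i) (T i)) {c : ℤ}
    {ξ : ℓ²(ℤ, H)} (hξ : SupportedFrom c ξ) :
    ∀ w : List (Fin k × Bool), w.length ≤ c →
      evalWord (fun i => P * T i * P) w ξ = evalWord T w ξ ∧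
        SupportedFrom (c - w.length) (evalWord T w ξ)
  | [], _ => ⟨rfl, by simpa [evalWord] using hξ⟩
  | (i, b) :: w, hw => by
    rw [List.length_cons, Nat.cast_succ] at hw ⊢
    obtain ⟨hw_eq, hw_supp⟩ := hP.evalWord_compress_apply hT hξ w (by omega)
    obtain ⟨h_eq, h_supp⟩ := hP.compress_letter_apply (hT i) b hw_supp (by omega)
    refine ⟨by simp only [evalWord, mul_apply_eq_comp, hw_eq, h_eq], ?_⟩
    rw [evalWord, mul_apply_eq_comp]
    exact h_supp.mono (by omega)

theorem adjoint_pow_mul_evalWord_compress_mul_pow (hP : IsProjectionOntoNonneg P)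
    {W : ℓ²(ℤ, H) →L[ℂ] ℓ²(ℤ, H)} (hW : IsWeightedShift 1 W) {k : ℕ} {A : Fin k → H →L[ℂ] H}
    {T : Fin k → ℓ²(ℤ, H) →L[ℂ] ℓ²(ℤ, H)} (hT : ∀ i, IsWeightedShift (A i) (T i))
    (w : List (Fin k × Bool)) {m : ℕ} (hm : w.length < m) :
    adjoint (P * W * P) ^ m * evalWord (fun i => P * T i * P) w * (P * W * P) ^ m =
      P * evalWord T w * P := by
  have hV : (P * W * P) ^ m = W ^ m * P := hP.compress_pow hW (by omega)
  have hX : Commute (evalWord T w) (W ^ m) :=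
    (commute_evalWord (fun i => (hT i).commute hW) (fun i => (hT i).commute_adjoint hW) w).pow_right m
  have hY : evalWord (fun i => P * T i * P) w * (W ^ m * P) = W ^ m * (evalWord T w * P) := by
    ext1 ξ
    have hsupp : SupportedFrom m ((W ^ m * P) ξ) := by
      simpa using hW.supportedFrom_pow (hP.supportedFrom_apply ξ) m
    rw [mul_apply_eq_comp, (hP.evalWord_compress_apply hT hsupp w (by omega)).1,
      ← mul_apply_eq_comp, ← mul_assoc, hX.eq, mul_assoc]
  calc adjoint (P * W * P) ^ m * evalWord (fun i => P * T i * P) w * (P * W * P) ^ m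
      = P * (adjoint W ^ m * W ^ m) * (evalWord T w * P) := by
        rw [mul_assoc, hV, hY, ← star_eq_adjoint, ← star_pow, hV, star_mul, star_pow,
          star_eq_adjoint, star_eq_adjoint, hP.adjoint_eq]
        noncomm_ring
    _ = P * evalWord T w * P := by rw [hW.adjoint_pow_mul_pow, mul_one, mul_assoc]

end IsProjectionOntoNonneg

end Compression

/-- For bounded operators `A₁,…,A_k` on `H`, a *-polynomial `p` of degree `d`,
and any `m > d`, one has `V*^m · p(Ψ⁺_{A₁},…,Ψ⁺_{A_k}) · V^m = P₊ · p(Ψ_{A₁},…,Ψ_{A_k}) · P₊`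
on `ℓ²(ℤ,H)`, where `(Ψ_A ξ)(n) = A(ξ(n−1))`, `Ψ⁺_A = P₊ Ψ_A P₊`, `V = P₊ W P₊` with `W`
the bilateral shift, and `P₊` the projection onto `{ξ : ξ(n) = 0 for n < 0}`. -/
theorem stmt1 {H : Type} [NormedAddCommGroup H] [InnerProductSpace ℂ H] [CompleteSpace H]
    {k : ℕ} (A : Fin k → H →L[ℂ] H)
    (W Pplus : lp (fun _ : ℤ => H) 2 →L[ℂ] lp (fun _ : ℤ => H) 2)
    (hW : ∀ (ξ : lp (fun _ : ℤ => H) 2) (n : ℤ), (W ξ) n = ξ (n - 1))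
    (hP : ∀ (ξ : lp (fun _ : ℤ => H) 2) (n : ℤ), (Pplus ξ) n = if 0 ≤ n then ξ n else 0)
    (Ψ : (H →L[ℂ] H) → lp (fun _ : ℤ => H) 2 →L[ℂ] lp (fun _ : ℤ => H) 2)
    (hΨ : ∀ (B : H →L[ℂ] H) (ξ : lp (fun _ : ℤ => H) 2) (n : ℤ), (Ψ B ξ) n = B (ξ (n - 1)))
    (p : List (ℂ × List (Fin k × Bool))) (m : ℕ) (hm : polyDegree p < m) :
    (adjoint (Pplus * W * Pplus)) ^ m * evalPoly (fun i => Pplus * Ψ (A i) * Pplus) p *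
        (Pplus * W * Pplus) ^ m =
      Pplus * evalPoly (fun i => Ψ (A i)) p * Pplus := by
  have hW₁ : IsWeightedShift 1 W := hW
  exact mul_evalPoly_mul_eq p fun cw hcw =>
    IsProjectionOntoNonneg.adjoint_pow_mul_evalWord_compress_mul_pow hP hW₁ (fun i => hΨ (A i))
      cw.2 ((length_le_polyDegree hcw).trans_lt hm)
end

section
/- Let A be a bounded operator on L²(ℝ,H) which commutes with the translation operator τ_y for every y ∈ ℝ. Then ‖P₊ A P₊‖ = ‖A‖. (This is the continuous analogue, Lemma 3.10 of the paper, of the discrete compression lemma; it is proved using the projections onto L²([a,∞),H), which tend strongly to 1 as a → −∞.) -/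
/-!
Translating a vector far to the right, `P₊` acts almost as the identity on it: the part of
`τ_y ξ` left of `0` is the part of `ξ` left of `-y`, whose `L²` mass tends to `0`. Since `A`
commutes with `τ_y` and `τ_y` is isometric, `‖A ξ‖ = ‖A τ_y ξ‖` is, up to an error vanishing as
`y → ∞`, at most `‖P₊ A P₊ τ_y ξ‖ ≤ ‖P₊ A P₊‖ ‖ξ‖`. The other inequality holds as `‖P₊‖ ≤ 1`.
-/

open MeasureTheory ContinuousLinearMap

open Filter Topology

namespace ContinuousLinearMap

variable {𝕜 E ι : Type*} [NontriviallyNormedField 𝕜] [SeminormedAddCommGroup E] [NormedSpace 𝕜 E]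
  {l : Filter ι} {A P : E →L[𝕜] E} {τ : ι → E →L[𝕜] E}

theorem opNorm_le_opNorm_mul_mul_of_tendsto [l.NeBot] (hτ : ∀ i x, ‖τ i x‖ = ‖x‖)
    (hA : ∀ i, Commute A (τ i)) (hP : ∀ x, Tendsto (fun i => P (τ i x) - τ i x) l (𝓝 0)) :
    ‖A‖ ≤ ‖P * A * P‖ := by
  refine opNorm_le_bound _ (norm_nonneg _) fun x => ?_
  have hAτ : ∀ i, A (τ i x) = τ i (A x) := fun i => congr($(hA i) x)
  -- `A - P A P = (1 - P) A + P A (1 - P)` and both `1 - P` factors die along `τ i`.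
  have hdefect : Tendsto (fun i => A (τ i x) - (P * A * P) (τ i x)) l (𝓝 0) := by
    have h := (hP (A x)).neg.sub (((P * A).continuous.tendsto 0).comp (hP x))
    simp only [neg_zero, map_zero, sub_zero] at h
    refine h.congr fun i => ?_
    simp only [Function.comp_apply, mul_apply_eq_comp, map_sub, hAτ]
    abel
  have hbound : ∀ i, ‖A x‖ ≤ ‖P * A * P‖ * ‖x‖ + ‖A (τ i x) - (P * A * P) (τ i x)‖ := fun i =>
    calc ‖A x‖ = ‖A (τ i x)‖ := by rw [hAτ, hτ]
      _ ≤ ‖(P * A * P) (τ i x)‖ + ‖A (τ i x) - (P * A * P) (τ i x)‖ := norm_le_insert' _ _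
      _ ≤ ‖P * A * P‖ * ‖x‖ + ‖A (τ i x) - (P * A * P) (τ i x)‖ := by
        grw [le_opNorm, hτ]
  exact ge_of_tendsto' (by simpa using tendsto_const_nhds.add hdefect.norm) hbound

theorem opNorm_mul_mul_eq_of_tendsto [l.NeBot] (hτ : ∀ i x, ‖τ i x‖ = ‖x‖)
    (hA : ∀ i, Commute A (τ i)) (hP₁ : ‖P‖ ≤ 1)
    (hP : ∀ x, Tendsto (fun i => P (τ i x) - τ i x) l (𝓝 0)) :
    ‖P * A * P‖ = ‖A‖ := by
  refine le_antisymm ?_ (opNorm_le_opNorm_mul_mul_of_tendsto hτ hA hP)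
  calc ‖P * A * P‖ ≤ ‖P‖ * ‖A‖ * ‖P‖ := norm_mul₃_le
    _ ≤ 1 * ‖A‖ * 1 := by gcongr
    _ = ‖A‖ := by ring

end ContinuousLinearMap

namespace MeasureTheory

variable {α β E : Type*} [MeasurableSpace α] [MeasurableSpace β] [NormedAddCommGroup E]
  {μ : Measure α} {ν : Measure β} {p : ENNReal}

theorem eLpNorm_restrict_preimage_of_ae_eq_comp {T : α → β} (hT : MeasurePreserving T μ ν)
    {f : β → E} (hf : AEStronglyMeasurable f ν) {g : α → E} (hg : g =ᵐ[μ] f ∘ T)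
    {s : Set β} (hs : MeasurableSet s) :
    eLpNorm g p (μ.restrict (T ⁻¹' s)) = eLpNorm f p (ν.restrict s) := by
  rw [eLpNorm_congr_ae (ae_restrict_of_ae hg)]
  exact eLpNorm_comp_measurePreserving hf.restrict (hT.restrict_preimage hs)

theorem Lp.norm_eq_of_ae_eq_comp {T : α → β} (hT : MeasurePreserving T μ ν)
    {f : Lp E p ν} {g : Lp E p μ} (hg : g =ᵐ[μ] f ∘ T) : ‖g‖ = ‖f‖ := by
  have h := eLpNorm_restrict_preimage_of_ae_eq_comp (p := p) hT (Lp.aestronglyMeasurable f) hg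
    MeasurableSet.univ
  rw [Set.preimage_univ, Measure.restrict_univ, Measure.restrict_univ] at h
  rw [Lp.norm_def, Lp.norm_def, h]

theorem Lp.norm_le_of_ae_eq_indicator {s : Set α} {f g : Lp E p μ}
    (hg : g =ᵐ[μ] s.indicator f) : ‖g‖ ≤ ‖f‖ := by
  rw [Lp.norm_def, Lp.norm_def, eLpNorm_congr_ae hg]
  exact ENNReal.toReal_mono (Lp.eLpNorm_ne_top f) (eLpNorm_indicator_le _)

theorem Lp.norm_sub_eq_of_ae_eq_indicator {s : Set α} (hs : MeasurableSet s) {f g : Lp E p μ}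
    (hg : g =ᵐ[μ] s.indicator f) : ‖g - f‖ = (eLpNorm f p (μ.restrict sᶜ)).toReal := by
  have hsub : ⇑(g - f) =ᵐ[μ] -sᶜ.indicator f := by
    filter_upwards [Lp.coeFn_sub g f, hg] with x hx hgx
    rw [hx, Pi.sub_apply, hgx]
    by_cases hxs : x ∈ s <;> simp [hxs]
  rw [Lp.norm_def, eLpNorm_congr_ae hsub, eLpNorm_neg,
    eLpNorm_indicator_eq_eLpNorm_restrict hs.compl]

theorem MemLp.tendsto_eLpNorm_restrict_atTop {ι : Type*} [Preorder ι] [Nonempty ι]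
    [IsCountablyGenerated (atTop : Filter ι)] {f : α → E} (hf : MemLp f p μ) (hp : p ≠ ⊤)
    {s : ι → Set α} (hs : ∀ i, MeasurableSet (s i)) (hanti : Antitone s) (hempty : ⋂ i, s i = ∅) :
    Tendsto (fun i => eLpNorm f p (μ.restrict (s i))) atTop (𝓝 0) := by
  rcases eq_or_ne p 0 with rfl | hp0
  · simpa using tendsto_const_nhds
  -- The `p`-th powers of the restricted norms are the masses of a finite measure.
  set ν := μ.withDensity fun x => ‖f x‖ₑ ^ p.toReal
  have hν : ∀ t, MeasurableSet t → eLpNorm f p (μ.restrict t) = ν t ^ (1 / p.toReal) := by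
    intro t ht
    rw [eLpNorm_eq_lintegral_rpow_enorm_toReal hp0 hp, withDensity_apply _ ht]
  have hfin : ν Set.univ ≠ ⊤ := by
    rw [withDensity_apply _ MeasurableSet.univ, Measure.restrict_univ]
    exact (lintegral_rpow_enorm_lt_top_of_eLpNorm_lt_top hp0 hp hf.eLpNorm_lt_top).ne
  have hmass : Tendsto (ν ∘ s) atTop (𝓝 0) := by
    simpa [hempty] using tendsto_measure_iInter_atTop (fun i => (hs i).nullMeasurableSet) hanti
      ⟨Classical.arbitrary ι, measure_ne_top_of_subset (Set.subset_univ _) hfin⟩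
  have hroot := (ENNReal.continuous_rpow_const (y := 1 / p.toReal)).tendsto 0 |>.comp hmass
  rw [ENNReal.zero_rpow_of_pos (by simp [ENNReal.toReal_pos hp0 hp])] at hroot
  exact hroot.congr fun i => (hν (s i) (hs i)).symm

end MeasureTheory

theorem stmt7_general {H : Type} [NormedAddCommGroup H] [InnerProductSpace ℂ H]
    (τ : ℝ → Lp H 2 (volume : Measure ℝ) →L[ℂ] Lp H 2 (volume : Measure ℝ))
    (hτ : ∀ (y : ℝ) (ξ : Lp H 2 (volume : Measure ℝ)),
      (τ y ξ : ℝ → H) =ᵐ[volume] fun t => ξ (t - y))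
    (Pplus : Lp H 2 (volume : Measure ℝ) →L[ℂ] Lp H 2 (volume : Measure ℝ))
    (hP : ∀ ξ : Lp H 2 (volume : Measure ℝ),
      (Pplus ξ : ℝ → H) =ᵐ[volume] fun t => if 0 ≤ t then ξ t else 0)
    (A : Lp H 2 (volume : Measure ℝ) →L[ℂ] Lp H 2 (volume : Measure ℝ))
    (hcomm : ∀ y : ℝ, A * τ y = τ y * A) :
    ‖Pplus * A * Pplus‖ = ‖A‖ := by
  have hshift := measurePreserving_sub_right (volume : Measure ℝ)
  have hP' : ∀ ξ, (Pplus ξ : ℝ → H) =ᵐ[volume] (Set.Ici 0).indicator ξ := fun ξ =>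
    (hP ξ).trans (.of_eq (funext fun t => by simp [Set.indicator_apply]))
  have hP₁ : ‖Pplus‖ ≤ 1 :=
    opNorm_le_bound _ zero_le_one fun ξ => by simpa using Lp.norm_le_of_ae_eq_indicator (hP' ξ)
  have hdefect : ∀ y ξ, ‖Pplus (τ y ξ) - τ y ξ‖
      = (eLpNorm ξ 2 (volume.restrict (Set.Iio (-y)))).toReal := fun y ξ => by
    rw [Lp.norm_sub_eq_of_ae_eq_indicator measurableSet_Ici (hP' _), Set.compl_Ici,
      ← eLpNorm_restrict_preimage_of_ae_eq_comp (hshift y) (Lp.aestronglyMeasurable ξ) (hτ y ξ)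
        measurableSet_Iio, Set.preimage_sub_const_Iio, neg_add_cancel]
  refine opNorm_mul_mul_eq_of_tendsto (l := atTop)
    (fun y ξ => Lp.norm_eq_of_ae_eq_comp (hshift y) (hτ y ξ)) hcomm hP₁ fun ξ => ?_
  have htail := (Lp.memLp ξ).tendsto_eLpNorm_restrict_atTop ENNReal.ofNat_ne_top
    (fun _ => measurableSet_Iio) (fun a b hab => Set.Iio_subset_Iio (neg_le_neg hab))
    (Set.eq_empty_of_forall_notMem fun t ht => by simpa using Set.mem_iInter.1 ht (-t))
  rw [tendsto_iff_norm_sub_tendsto_zero]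
  simpa [hdefect, Function.comp_def] using (ENNReal.tendsto_toReal ENNReal.zero_ne_top).comp htail

/-- If a bounded operator `A` on `L²(ℝ,H)` commutes with every translation
`τ_y`, `(τ_y ξ)(t) = ξ(t−y)`, then `‖P₊ A P₊‖ = ‖A‖`, where `P₊` is the orthogonal
projection onto `{ξ : ξ(t) = 0 for a.e. t < 0}`. -/
theorem stmt7 {H : Type} [NormedAddCommGroup H] [InnerProductSpace ℂ H] [CompleteSpace H]
    (τ : ℝ → Lp H 2 (volume : Measure ℝ) →L[ℂ] Lp H 2 (volume : Measure ℝ))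
    (hτ : ∀ (y : ℝ) (ξ : Lp H 2 (volume : Measure ℝ)),
      (τ y ξ : ℝ → H) =ᵐ[volume] fun t => ξ (t - y))
    (Pplus : Lp H 2 (volume : Measure ℝ) →L[ℂ] Lp H 2 (volume : Measure ℝ))
    (hP : ∀ ξ : Lp H 2 (volume : Measure ℝ),
      (Pplus ξ : ℝ → H) =ᵐ[volume] fun t => if 0 ≤ t then ξ t else 0)
    (A : Lp H 2 (volume : Measure ℝ) →L[ℂ] Lp H 2 (volume : Measure ℝ))
    (hcomm : ∀ y : ℝ, A * τ y = τ y * A) :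
    ‖Pplus * A * Pplus‖ = ‖A‖ :=
  stmt7_general τ hτ Pplus hP A hcomm
end

section
/- Let f₁,…,f_k : ℝ → B(H) be Bochner integrable functions vanishing almost everywhere on (−∞,0). For every *-polynomial p in k operator variables, ‖p(T_{f₁},…,T_{f_k})‖ ≤ ‖p(T⁺_{f₁},…,T⁺_{f_k})‖. (This is Corollary 3.12 of the paper, 'ψ₊ majorizes ψ̃' in the continuous case, obtained by combining the translation-commutant compression lemma with the limit formula lim_{x→∞}‖V_x* p(T⁺) V_x − P₊ p(T) P₊‖ = 0.) -/
open MeasureTheory ContinuousLinearMap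

/-!
Let `Qₙ = τₙ* P₊ τₙ`, the multiplication by the indicator of `[-n, ∞)`. Each `T_f` commutes with
translations, so `Qₙ T_f Qₙ = τₙ* T⁺_f τₙ`; hence `p(Qₙ T_{f₁} Qₙ, …)` is unitarily conjugate to
`p(T⁺_{f₁}, …)` and has the same norm. Since `Qₙ → 1` strongly through self-adjoint contractions,
`p(Qₙ T_{f₁} Qₙ, …) → p(T_{f₁}, …)` strongly, and the operator norm can only drop in a strong limit.
-/

open Filter Topology
open scoped ENNReal

section StarPolynomial

variable {E : Type*} [NormedAddCommGroup E] [InnerProductSpace ℂ E] [CompleteSpace E] {k : ℕ}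

theorem map_evalWord {F : Type*} [NormedAddCommGroup F] [InnerProductSpace ℂ F]
    [CompleteSpace F] (φ : (E →L[ℂ] E) →⋆ₐ[ℂ] (F →L[ℂ] F)) (T : Fin k → E →L[ℂ] E)
    (w : List (Fin k × Bool)) : φ (evalWord T w) = evalWord (fun i => φ (T i)) w := by
  induction w with
  | nil => exact map_one φ
  | cons a w ih =>
    obtain ⟨i, _ | _⟩ := a <;>
      simp only [evalWord, map_mul, ih, ← star_eq_adjoint, map_star, Bool.false_eq_true, ite_true,
        ite_false]

theorem map_evalPoly {F : Type*} [NormedAddCommGroup F] [InnerProductSpace ℂ F]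
    [CompleteSpace F] (φ : (E →L[ℂ] E) →⋆ₐ[ℂ] (F →L[ℂ] F)) (T : Fin k → E →L[ℂ] E)
    (p : List (ℂ × List (Fin k × Bool))) :
    φ (evalPoly T p) = evalPoly (fun i => φ (T i)) p := by
  simp only [evalPoly, map_list_sum, List.map_map]
  congr 1
  refine List.map_congr_left fun cw _ => ?_
  simp [map_smul, map_evalWord]

theorem Filter.Tendsto.apply_of_norm_le {𝕜 F G ι : Type*} [NontriviallyNormedField 𝕜]
    [NormedAddCommGroup F] [NormedSpace 𝕜 F] [NormedAddCommGroup G] [NormedSpace 𝕜 G]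
    {l : Filter ι} {A : ι → F →L[𝕜] G} {x : ι → F} {x₀ : F} {y₀ : G} {C : ℝ}
    (hC : ∀ n, ‖A n‖ ≤ C) (hA : Tendsto (fun n => A n x₀) l (𝓝 y₀))
    (hx : Tendsto x l (𝓝 x₀)) : Tendsto (fun n => A n (x n)) l (𝓝 y₀) := by
  have hdiff : Tendsto (fun n => A n (x n - x₀)) l (𝓝 0) := by
    refine squeeze_zero_norm (fun n => (A n).le_of_opNorm_le (hC n) _) ?_
    simpa using (tendsto_iff_norm_sub_tendsto_zero.mp hx).const_mul C
  simpa using hdiff.add hA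

theorem IsSelfAdjoint.adjoint_mul_mul {Q : E →L[ℂ] E} (hQ : IsSelfAdjoint Q) (A : E →L[ℂ] E) :
    adjoint (Q * A * Q) = Q * adjoint A * Q := by
  rw [← star_eq_adjoint, ← star_eq_adjoint, star_mul, star_mul, hQ.star_eq, mul_assoc]

variable {ι : Type*} {l : Filter ι} {Q : ι → E →L[ℂ] E}

theorem tendsto_evalWord_mul_mul_apply (hQsa : ∀ n, IsSelfAdjoint (Q n)) (hQ1 : ∀ n, ‖Q n‖ ≤ 1)
    (hQ : ∀ ξ, Tendsto (fun n => Q n ξ) l (𝓝 ξ)) (T : Fin k → E →L[ℂ] E)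
    (w : List (Fin k × Bool)) (ξ : E) :
    Tendsto (fun n => evalWord (fun j => Q n * T j * Q n) w ξ) l (𝓝 (evalWord T w ξ)) := by
  induction w with
  | nil => exact tendsto_const_nhds
  | cons a w ih =>
    obtain ⟨i, b⟩ := a
    set L := if b then adjoint (T i) else T i
    have hletter : ∀ n, (if b then adjoint (Q n * T i * Q n) else Q n * T i * Q n)
        = Q n * L * Q n := by
      intro n; cases b <;> simp [L, (hQsa n).adjoint_mul_mul]
    simp only [evalWord, hletter, mul_apply_eq_comp]
    exact Tendsto.apply_of_norm_le hQ1 (hQ _)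
      ((L.continuous.tendsto _).comp ((hQ _).apply_of_norm_le hQ1 ih))

theorem tendsto_evalPoly_mul_mul_apply (hQsa : ∀ n, IsSelfAdjoint (Q n)) (hQ1 : ∀ n, ‖Q n‖ ≤ 1)
    (hQ : ∀ ξ, Tendsto (fun n => Q n ξ) l (𝓝 ξ)) (T : Fin k → E →L[ℂ] E)
    (p : List (ℂ × List (Fin k × Bool))) (ξ : E) :
    Tendsto (fun n => evalPoly (fun j => Q n * T j * Q n) p ξ) l (𝓝 (evalPoly T p ξ)) := by
  induction p with
  | nil => exact tendsto_const_nhds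
  | cons cw p ih =>
    simp only [evalPoly, List.map_cons, List.sum_cons, add_apply, smul_apply] at ih ⊢
    exact ((tendsto_evalWord_mul_mul_apply hQsa hQ1 hQ T cw.2 ξ).const_smul cw.1).add ih

theorem norm_evalPoly_le_norm_evalPoly_mul_mul [l.NeBot] {P : E →L[ℂ] E} (hPsa : IsSelfAdjoint P)
    (hP1 : ‖P‖ ≤ 1) (U : ι → unitary (E →L[ℂ] E))
    (hU : ∀ ξ, Tendsto (fun n => (star (U n : E →L[ℂ] E) * P * U n) ξ) l (𝓝 ξ))
    (T : Fin k → E →L[ℂ] E) (hT : ∀ n j, Commute (U n : E →L[ℂ] E) (T j))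
    (p : List (ℂ × List (Fin k × Bool))) :
    ‖evalPoly T p‖ ≤ ‖evalPoly (fun j => P * T j * P) p‖ := by
  set Q := fun n => star (U n : E →L[ℂ] E) * P * U n
  have hconj : ∀ n j, Q n * T j * Q n
      = (Unitary.conjStarAlgAut ℂ _ (star (U n))).toStarAlgHom (P * T j * P) := by
    intro n j
    have hUT : (U n : E →L[ℂ] E) * T j * star (U n : E →L[ℂ] E) = T j := by
      rw [(hT n j).eq, mul_assoc, Unitary.mul_star_self_of_mem (U n).2, mul_one]
    calc Q n * T j * Q n
        = star (U n : E →L[ℂ] E) * P * ((U n : E →L[ℂ] E) * T j * star (U n : E →L[ℂ] E)) * P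
          * U n := by simp only [Q, mul_assoc]
      _ = _ := by
        rw [hUT]
        simp only [StarAlgEquiv.toStarAlgHom_apply, Unitary.conjStarAlgAut_apply, Unitary.coe_star,
          star_star, mul_assoc]
  have hQ1 : ∀ n, ‖Q n‖ ≤ 1 := fun n => by
    simpa only [Q, ← Unitary.coe_star, CStarRing.norm_mul_coe_unitary,
      CStarRing.norm_coe_unitary_mul] using hP1
  refine ContinuousLinearMap.opNorm_le_bound _ (norm_nonneg _) fun ξ => ?_
  refine le_of_tendsto ((tendsto_evalPoly_mul_mul_apply (fun n => hPsa.conjugate' _) hQ1 hU T p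
    ξ).norm) (Eventually.of_forall fun n => ?_)
  rw [funext (hconj n), ← map_evalPoly]
  refine ((ContinuousLinearMap.le_opNorm _ _).trans_eq ?_)
  simp only [StarAlgEquiv.toStarAlgHom_apply, Unitary.conjStarAlgAut_apply, ← Unitary.coe_star,
    CStarRing.norm_mul_coe_unitary, CStarRing.norm_coe_unitary_mul]

end StarPolynomial

section Indicator

variable {α E : Type*} [MeasurableSpace α] {μ : Measure α} [NormedAddCommGroup E]
  {p : ℝ≥0∞} [Fact (1 ≤ p)]

theorem norm_le_one_of_coeFn_eq_indicator {𝕜 : Type*} [NontriviallyNormedField 𝕜]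
    [NormedSpace 𝕜 E] {s : Set α} (P : Lp E p μ →L[𝕜] Lp E p μ)
    (hP : ∀ ξ, P ξ =ᵐ[μ] s.indicator ξ) : ‖P‖ ≤ 1 := by
  refine P.opNorm_le_bound zero_le_one fun ξ => ?_
  rw [one_mul, Lp.norm_def, Lp.norm_def, eLpNorm_congr_ae (hP ξ)]
  exact ENNReal.toReal_mono (Lp.eLpNorm_ne_top ξ) (eLpNorm_indicator_le _)

theorem isSelfAdjoint_of_coeFn_eq_indicator [InnerProductSpace ℂ E] [CompleteSpace E]
    {s : Set α} (P : Lp E 2 μ →L[ℂ] Lp E 2 μ) (hP : ∀ ξ, P ξ =ᵐ[μ] s.indicator ξ) :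
    IsSelfAdjoint P := by
  refine isSelfAdjoint_iff_isSymmetric.mpr fun ξ η => ?_
  rw [L2.inner_def, L2.inner_def]
  refine integral_congr_ae ?_
  filter_upwards [hP ξ, hP η] with t hξ hη
  by_cases ht : t ∈ s <;> simp [hξ, hη, ht]

theorem tendsto_of_coeFn_eq_indicator (hp : p ≠ ∞) {s : ℕ → Set α}
    (hs : ∀ᵐ x ∂μ, ∀ᶠ n in atTop, x ∈ s n) (ξ : Lp E p μ) {η : ℕ → Lp E p μ}
    (hη : ∀ n, η n =ᵐ[μ] (s n).indicator ξ) : Tendsto η atTop (𝓝 ξ) := by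
  have hp0 : p ≠ 0 := (zero_lt_one.trans_le Fact.out).ne'
  rw [Lp.tendsto_Lp_iff_tendsto_eLpNorm']
  simp_rw [eLpNorm_eq_lintegral_rpow_enorm_toReal hp0 hp]
  have hlim : Tendsto (fun n => ∫⁻ x, ‖(η n - ξ : α → E) x‖ₑ ^ p.toReal ∂μ) atTop (𝓝 0) := by
    have hdom := tendsto_lintegral_of_dominated_convergence' (f := 0)
      (F := fun n x => ‖(η n - ξ : α → E) x‖ₑ ^ p.toReal)
      (fun x => ‖ξ x‖ₑ ^ p.toReal)
      (fun n => ((Lp.aestronglyMeasurable (η n)).sub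
        (Lp.aestronglyMeasurable ξ)).enorm.pow_const _)
      (fun n => by
        filter_upwards [hη n] with x hx
        by_cases h : x ∈ s n <;> simp [hx, h, ENNReal.toReal_pos hp0 hp])
      (lintegral_rpow_enorm_lt_top_of_eLpNorm_lt_top hp0 hp (Lp.eLpNorm_lt_top ξ)).ne ?_
    · simpa using hdom
    filter_upwards [hs, ae_all_iff.mpr hη] with x hx hηx
    refine tendsto_const_nhds.congr' ?_
    filter_upwards [hx] with n hn
    simp [hηx n, hn, ENNReal.toReal_pos hp0 hp]
  have h := ((ENNReal.continuous_rpow_const (y := 1 / p.toReal)).tendsto 0).comp hlim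
  rwa [ENNReal.zero_rpow_of_pos (by simp [ENNReal.toReal_pos hp0 hp])] at h

end Indicator

section Translation

variable {G E : Type*} [MeasurableSpace G] [AddGroup G] [MeasurableAdd G] {μ : Measure G}
  [μ.IsAddRightInvariant] [NormedAddCommGroup E] {p : ℝ≥0∞} [Fact (1 ≤ p)]

variable (𝕜 : Type*) [NormedRing 𝕜] [Module 𝕜 E] [IsBoundedSMul 𝕜 E]

noncomputable def translation (y : G) : Lp E p μ ≃ₗᵢ[𝕜] Lp E p μ where
  __ := Lp.compMeasurePreservingₗᵢ 𝕜 (· - y) (measurePreserving_sub_right μ y)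
  invFun := Lp.compMeasurePreserving (· + y) (measurePreserving_add_right μ y)
  left_inv ξ := by
    refine Lp.ext ((Lp.coeFn_compMeasurePreserving _ _).trans ?_)
    filter_upwards [(measurePreserving_add_right μ y).quasiMeasurePreserving.ae_eq_comp
      (Lp.coeFn_compMeasurePreserving ξ (measurePreserving_sub_right μ y))] with t ht
    exact ht.trans (by simp)
  right_inv ξ := by
    refine Lp.ext ((Lp.coeFn_compMeasurePreserving _ _).trans ?_)
    filter_upwards [(measurePreserving_sub_right μ y).quasiMeasurePreserving.ae_eq_comp
      (Lp.coeFn_compMeasurePreserving ξ (measurePreserving_add_right μ y))] with t ht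
    exact ht.trans (by simp)

theorem coeFn_translation (y : G) (ξ : Lp E p μ) :
    translation 𝕜 y ξ =ᵐ[μ] fun t => ξ (t - y) :=
  Lp.coeFn_compMeasurePreserving ξ _

theorem coeFn_translation_symm (y : G) (ξ : Lp E p μ) :
    (translation 𝕜 y).symm ξ =ᵐ[μ] fun t => ξ (t + y) :=
  Lp.coeFn_compMeasurePreserving ξ _

end Translation

section Convolution

variable {G E F 𝕜 : Type*} [MeasurableSpace G] [AddCommGroup G] [MeasurableAdd₂ G]
  [MeasurableNeg G] {μ : Measure G} [SFinite μ] [μ.IsAddRightInvariant] [NormedAddCommGroup E]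
  [NormedAddCommGroup F] [NormedSpace ℝ F] {p : ℝ≥0∞} [Fact (1 ≤ p)] [NormedRing 𝕜] [Module 𝕜 E]
  [IsBoundedSMul 𝕜 E] [Module 𝕜 F] [IsBoundedSMul 𝕜 F]

theorem apply_translation_of_coeFn_eq_integral (f : G → E → F) (A : Lp E p μ → Lp F p μ)
    (hA : ∀ ξ, A ξ =ᵐ[μ] fun t => ∫ y, f y (ξ (t - y)) ∂μ) (c : G) (ξ : Lp E p μ) :
    A (translation 𝕜 c ξ) = translation 𝕜 c (A ξ) := by
  refine Lp.ext ?_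
  calc A (translation 𝕜 c ξ) =ᵐ[μ] fun t => ∫ y, f y (translation 𝕜 c ξ (t - y)) ∂μ := hA _
    _ = fun t => ∫ y, f y (ξ (t - c - y)) ∂μ := by
        funext t
        refine integral_congr_ae ?_
        filter_upwards [(quasiMeasurePreserving_sub_left_of_right_invariant μ t).ae_eq_comp
          (coeFn_translation 𝕜 c ξ)] with y hy
        simp only [Function.comp_apply] at hy
        rw [hy, sub_right_comm]
    _ =ᵐ[μ] fun t => A ξ (t - c) :=
        ((measurePreserving_sub_right μ c).quasiMeasurePreserving.ae_eq_comp (hA ξ)).symm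
    _ =ᵐ[μ] translation 𝕜 c (A ξ) := (coeFn_translation 𝕜 c (A ξ)).symm

end Convolution

section TranslationUnitary

variable {G E : Type*} [MeasurableSpace G] [AddGroup G] [MeasurableAdd G] {μ : Measure G}
  [μ.IsAddRightInvariant] [NormedAddCommGroup E] [InnerProductSpace ℂ E] [CompleteSpace E]

variable (E μ) in
noncomputable def translationUnitary (y : G) : unitary (Lp E 2 μ →L[ℂ] Lp E 2 μ) :=
  Unitary.linearIsometryEquiv.symm (translation ℂ y)

theorem translationUnitary_apply (y : G) (ξ : Lp E 2 μ) :
    (translationUnitary E μ y : Lp E 2 μ →L[ℂ] Lp E 2 μ) ξ = translation ℂ y ξ :=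
  rfl

theorem star_translationUnitary_apply (y : G) (ξ : Lp E 2 μ) :
    star (translationUnitary E μ y : Lp E 2 μ →L[ℂ] Lp E 2 μ) ξ = (translation ℂ y).symm ξ := by
  calc star (translationUnitary E μ y : Lp E 2 μ →L[ℂ] Lp E 2 μ) ξ
      = (star (translationUnitary E μ y : Lp E 2 μ →L[ℂ] Lp E 2 μ) * translationUnitary E μ y)
          ((translation ℂ y).symm ξ) := by
        rw [mul_apply_eq_comp, translationUnitary_apply, LinearIsometryEquiv.apply_symm_apply]
    _ = (translation ℂ y).symm ξ := by
        rw [Unitary.star_mul_self_of_mem (translationUnitary E μ y).2, one_apply_eq_self]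

theorem coeFn_star_translationUnitary_mul_mul {s : Set G} {P : Lp E 2 μ →L[ℂ] Lp E 2 μ}
    (hP : ∀ ξ, P ξ =ᵐ[μ] s.indicator ξ) (y : G) (ξ : Lp E 2 μ) :
    (star (translationUnitary E μ y : Lp E 2 μ →L[ℂ] Lp E 2 μ) * P * translationUnitary E μ y) ξ
      =ᵐ[μ] ((· + y) ⁻¹' s).indicator ξ := by
  have hy := (measurePreserving_add_right μ y).quasiMeasurePreserving
  rw [mul_apply_eq_comp, mul_apply_eq_comp, star_translationUnitary_apply,
    translationUnitary_apply]
  filter_upwards [coeFn_translation_symm ℂ y (P (translation ℂ y ξ)),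
    hy.ae_eq_comp (hP (translation ℂ y ξ)), hy.ae_eq_comp (coeFn_translation ℂ y ξ)]
    with t hsymm hP' hξ
  simp only [Function.comp_apply] at hP' hξ
  rw [hsymm, hP']
  by_cases ht : t + y ∈ s <;> simp [ht, hξ]

end TranslationUnitary

theorem stmt10_general {H : Type} [NormedAddCommGroup H] [InnerProductSpace ℂ H] [CompleteSpace H]
    {k : ℕ} (f : Fin k → ℝ → H →L[ℂ] H)
    (Pplus : Lp H 2 (volume : Measure ℝ) →L[ℂ] Lp H 2 (volume : Measure ℝ))
    (hP : ∀ ξ : Lp H 2 (volume : Measure ℝ),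
      (Pplus ξ : ℝ → H) =ᵐ[volume] fun t => if 0 ≤ t then ξ t else 0)
    (T : Fin k → Lp H 2 (volume : Measure ℝ) →L[ℂ] Lp H 2 (volume : Measure ℝ))
    (hT : ∀ (j : Fin k) (ξ : Lp H 2 (volume : Measure ℝ)),
      (T j ξ : ℝ → H) =ᵐ[volume] fun t => ∫ y, f j y (ξ (t - y)) ∂volume)
    (p : List (ℂ × List (Fin k × Bool))) :
    ‖evalPoly T p‖ ≤ ‖evalPoly (fun j => Pplus * T j * Pplus) p‖ := by
  have hPind : ∀ ξ, Pplus ξ =ᵐ[volume] (Set.Ici 0).indicator ξ := fun ξ =>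
    (hP ξ).trans (.of_forall fun t => by simp [Set.indicator_apply])
  have hcover : ∀ t : ℝ, ∀ᶠ n : ℕ in atTop, t ∈ (· + (n : ℝ)) ⁻¹' Set.Ici 0 := fun t =>
    (tendsto_natCast_atTop_atTop.eventually_ge_atTop (-t)).mono fun n hn => by
      simp only [Set.mem_preimage, Set.mem_Ici]
      linarith
  refine norm_evalPoly_le_norm_evalPoly_mul_mul (isSelfAdjoint_of_coeFn_eq_indicator Pplus hPind)
    (norm_le_one_of_coeFn_eq_indicator Pplus hPind)
    (fun n : ℕ => translationUnitary H volume (n : ℝ))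
    (fun ξ => tendsto_of_coeFn_eq_indicator ENNReal.ofNat_ne_top (ae_of_all _ hcover) ξ
      fun n => coeFn_star_translationUnitary_mul_mul hPind n ξ) T (fun n j => ?_) p
  refine ContinuousLinearMap.ext fun ξ => ?_
  exact (apply_translation_of_coeFn_eq_integral (fun y v => f j y v) (T j) (hT j) n ξ).symm

/-- For Bochner integrable `f₁,…,f_k : ℝ → B(H)` vanishing a.e. on `(−∞,0)`
and any *-polynomial `p`, `‖p(T_{f₁},…,T_{f_k})‖ ≤ ‖p(T⁺_{f₁},…,T⁺_{f_k})‖`, where `T_f`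
is convolution by `f` on `L²(ℝ,H)` and `T⁺_f = P₊ T_f P₊` with `P₊` the projection onto
`{ξ : ξ(t) = 0 a.e. t < 0}`. -/
theorem stmt10 {H : Type} [NormedAddCommGroup H] [InnerProductSpace ℂ H] [CompleteSpace H]
    {k : ℕ} (f : Fin k → ℝ → H →L[ℂ] H)
    (hf : ∀ j, Integrable (f j) volume)
    (hf0 : ∀ j, ∀ᵐ y : ℝ ∂volume, y < 0 → f j y = 0)
    (Pplus : Lp H 2 (volume : Measure ℝ) →L[ℂ] Lp H 2 (volume : Measure ℝ))
    (hP : ∀ ξ : Lp H 2 (volume : Measure ℝ),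
      (Pplus ξ : ℝ → H) =ᵐ[volume] fun t => if 0 ≤ t then ξ t else 0)
    (T : Fin k → Lp H 2 (volume : Measure ℝ) →L[ℂ] Lp H 2 (volume : Measure ℝ))
    (hT : ∀ (j : Fin k) (ξ : Lp H 2 (volume : Measure ℝ)),
      (T j ξ : ℝ → H) =ᵐ[volume] fun t => ∫ y, f j y (ξ (t - y)) ∂volume)
    (p : List (ℂ × List (Fin k × Bool))) :
    ‖evalPoly T p‖ ≤ ‖evalPoly (fun j => Pplus * T j * Pplus) p‖ :=
  stmt10_general f Pplus hP T hT p
end
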